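/- If there is a wellformed derivation of the sequent Γ ⊢ Δ (where Γ and Δ are finite sets of first-order formulae), then there exists a formula C such that Γ ⊢ C and C ⊢ Δ are both derivable, every predicate occurring positively in C occurs positively in some formula of Γ and positively in some formula of Δ, and every predicate occurring negatively in C occurs negatively in some formula of Γ and negatively in some formula of Δ. -/

import Mathlib

namespace Craig

abbrev var : Type := Nat
abbrev tm : Type := var
abbrev pred : Type := Nat

inductive form : Type
  | P : pred → List tm → form
  | Bot : form
  | Top : form
  | And : form → form → form
  | Or : form → form → form
  | Not : form → form
  | FAll : form → form
  | FEx : form → form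
  deriving DecidableEq

def liftSub (s : var → tm) : var → tm
  | 0 => 0
  | n + 1 => (s n) + 1

def fsubst (s : var → tm) : form → form
  | .P i tms => .P i (tms.map s)
  | .Bot => .Bot
  | .Top => .Top
  | .And A B => .And (fsubst s A) (fsubst s B)
  | .Or A B => .Or (fsubst s A) (fsubst s B)
  | .Not A => .Not (fsubst s A)
  | .FAll A => .FAll (fsubst (liftSub s) A)
  | .FEx A => .FEx (fsubst (liftSub s) A)

def preSuc : List Nat → List Nat
  | [] => []
  | 0 :: l => preSuc l
  | (n + 1) :: l => n :: preSuc l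

def fv : form → List var
  | .P _ tms => tms
  | .Bot => []
  | .Top => []
  | .And A B => fv A ++ fv B
  | .Or A B => fv A ++ fv B
  | .Not A => fv A
  | .FAll A => preSuc (fv A)
  | .FEx A => preSuc (fv A)

def posneg : form → Set pred × Set pred
  | .P i _ => ({i}, ∅)
  | .Bot => (∅, ∅)
  | .Top => (∅, ∅)
  | .And A B => ((posneg A).1 ∪ (posneg B).1, (posneg A).2 ∪ (posneg B).2)
  | .Or A B => ((posneg A).1 ∪ (posneg B).1, (posneg A).2 ∪ (posneg B).2)
  | .Not A => ((posneg A).2, (posneg A).1)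
  | .FAll A => posneg A
  | .FEx A => posneg A

def pos (A : form) : Set pred := (posneg A).1
def neg (A : form) : Set pred := (posneg A).2

def fAll (a : var) (A : form) : form :=
  .FAll (fsubst (fun v => if v = a then 0 else v + 1) A)
def fEx (a : var) (A : form) : form :=
  .FEx (fsubst (fun v => if v = a then 0 else v + 1) A)

def FAll_inst (t : tm) : form → form
  | .FAll A => fsubst (fun v => match v with | 0 => t | n + 1 => n) A
  | A => A

def FEx_inst (t : tm) : form → form
  | .FEx A => fsubst (fun v => match v with | 0 => t | n + 1 => n) A
  | A => A

abbrev Seq : Type := Set form × Set form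

def fvs (S : Set form) : Set var := ⋃ A ∈ S, {v | v ∈ fv A}

inductive Deriv : Type
  | Init : Seq → Deriv
  | BotL : Seq → Deriv
  | TopR : Seq → Deriv
  | AndL : Seq → Deriv → Deriv
  | AndR : Seq → Deriv → Deriv → Deriv
  | OrL : Seq → Deriv → Deriv → Deriv
  | OrR : Seq → Deriv → Deriv
  | NotL : Seq → Deriv → Deriv
  | NotR : Seq → Deriv → Deriv
  | AllL : Seq → Deriv → Deriv
  | AllR : Seq → Deriv → Deriv
  | ExL : Seq → Deriv → Deriv
  | ExR : Seq → Deriv → Deriv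
  | WL : Seq → Deriv → Deriv
  | WR : Seq → Deriv → Deriv

def root : Deriv → Seq
  | .Init s => s
  | .BotL s => s
  | .TopR s => s
  | .AndL s _ => s
  | .AndR s _ _ => s
  | .OrL s _ _ => s
  | .OrR s _ => s
  | .NotL s _ => s
  | .NotR s _ => s
  | .AllL s _ => s
  | .AllR s _ => s
  | .ExL s _ => s
  | .ExR s _ => s
  | .WL s _ => s
  | .WR s _ => s

def is_deriv : Deriv → Prop
  | .Init s => s.1.Finite ∧ s.2.Finite ∧ ∃ A, A ∈ s.1 ∧ A ∈ s.2
  | .BotL s => s.1.Finite ∧ s.2.Finite ∧ form.Bot ∈ s.1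
  | .TopR s => s.1.Finite ∧ s.2.Finite ∧ form.Top ∈ s.2
  | .AndL s d => s.1.Finite ∧ s.2.Finite ∧
      ∃ A B, form.And A B ∈ s.1 ∧ is_deriv d ∧ root d = ({A, B} ∪ s.1, s.2)
  | .AndR s dl dr => s.1.Finite ∧ s.2.Finite ∧
      ∃ A B, form.And A B ∈ s.2 ∧ is_deriv dl ∧ root dl = (s.1, s.2 ∪ {A}) ∧
        is_deriv dr ∧ root dr = (s.1, s.2 ∪ {B})
  | .OrL s dl dr => s.1.Finite ∧ s.2.Finite ∧
      ∃ A B, form.Or A B ∈ s.1 ∧ is_deriv dl ∧ root dl = ({A} ∪ s.1, s.2) ∧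
        is_deriv dr ∧ root dr = ({B} ∪ s.1, s.2)
  | .OrR s d => s.1.Finite ∧ s.2.Finite ∧
      ∃ A B, form.Or A B ∈ s.2 ∧ is_deriv d ∧ root d = (s.1, s.2 ∪ {A, B})
  | .NotL s d => s.1.Finite ∧ s.2.Finite ∧
      ∃ C, form.Not C ∈ s.1 ∧ is_deriv d ∧ root d = (s.1, s.2 ∪ {C})
  | .NotR s d => s.1.Finite ∧ s.2.Finite ∧
      ∃ C, form.Not C ∈ s.2 ∧ is_deriv d ∧ root d = ({C} ∪ s.1, s.2)
  | .AllL s d => s.1.Finite ∧ s.2.Finite ∧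
      ∃ A a t, fAll a A ∈ s.1 ∧ is_deriv d ∧
        root d = ({FAll_inst t (fAll a A)} ∪ s.1, s.2)
  | .AllR s d => s.1.Finite ∧ s.2.Finite ∧
      ∃ a A, fAll a A ∈ s.2 ∧ a ∉ fvs (s.1 ∪ s.2) ∧ is_deriv d ∧
        root d = (s.1, s.2 ∪ {A})
  | .ExL s d => s.1.Finite ∧ s.2.Finite ∧
      ∃ a A, fEx a A ∈ s.1 ∧ a ∉ fvs (s.1 ∪ s.2) ∧ is_deriv d ∧
        root d = ({A} ∪ s.1, s.2)
  | .ExR s d => s.1.Finite ∧ s.2.Finite ∧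
      ∃ A a t, fEx a A ∈ s.2 ∧ is_deriv d ∧
        root d = (s.1, s.2 ∪ {FEx_inst t (fEx a A)})
  | .WL s d => ∃ Γ Δ A, Γ.Finite ∧ Δ.Finite ∧ is_deriv d ∧ root d = (Γ, Δ) ∧
      s = ({A} ∪ Γ, Δ)
  | .WR s d => ∃ Γ Δ A, Γ.Finite ∧ Δ.Finite ∧ is_deriv d ∧ root d = (Γ, Δ) ∧
      s = (Γ, Δ ∪ {A})

def derivable (s : Seq) : Prop := ∃ d, is_deriv d ∧ root d = s

/-! Maehara's method. One proves, by induction on derivations, that every partition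
`Γ₁ ∪ Γ₂ ⊢ Δ₁ ∪ Δ₂` of a derivable sequent has an interpolant `C`: `Γ₁ ⊢ Δ₁, C` and
`C, Γ₂ ⊢ Δ₂` are derivable, and `C` only uses predicates with the polarities they have on both
sides. Exchanging the two parts and negating the interpolant is a symmetry of this notion, so at
each rule only the case where the principal formula lies in the first part has to be treated.
There the interpolant of the premise is kept, except for axioms (`⊥` or the axiom formula itself),
for the two-premise rules (disjunction of the two interpolants) and for the eigenvariable rules
`∀R`, `∃L`: the eigenvariable `a` does not occur in the second part, so `∃a C` interpolates. -/

lemma liftSub_id : liftSub (fun v => v) = fun v => v := by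
  funext v; cases v <;> rfl

lemma fsubst_id (A : form) : fsubst (fun v => v) A = A := by
  induction A <;> simp_all [fsubst, liftSub_id]

lemma liftSub_comp (s r : var → tm) :
    liftSub (fun v => s (r v)) = fun v => liftSub s (liftSub r v) := by
  funext v; cases v <;> rfl

lemma fsubst_fsubst (s r : var → tm) (A : form) :
    fsubst s (fsubst r A) = fsubst (fun v => s (r v)) A := by
  induction A generalizing s r <;> simp_all [fsubst, liftSub_comp]

lemma FEx_inst_fEx (a : var) (A : form) : FEx_inst a (fEx a A) = A := by
  simp only [fEx, FEx_inst, fsubst_fsubst]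
  have h : (fun v => (fun v => match v with | 0 => a | n + 1 => n)
      ((fun v => if v = a then 0 else v + 1) v)) = fun v : var => v := by
    funext v; by_cases h : v = a <;> simp [h]
  rw [h, fsubst_id]

lemma mem_preSuc (n : Nat) (l : List Nat) : n ∈ preSuc l ↔ n + 1 ∈ l := by
  induction l with
  | nil => simp [preSuc]
  | cons h t ih => cases h <;> simp [preSuc, ih]

lemma preSuc_map_liftSub (s : var → tm) (l : List Nat) :
    preSuc (l.map (liftSub s)) = (preSuc l).map s := by
  induction l with
  | nil => rfl
  | cons h t ih => cases h <;> simp [preSuc, liftSub, ih]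

lemma fv_fsubst (s : var → tm) (A : form) : fv (fsubst s A) = (fv A).map s := by
  induction A generalizing s <;> simp_all [fsubst, fv, preSuc_map_liftSub]

lemma notMem_fv_fEx (a : var) (A : form) : a ∉ fv (fEx a A) := by
  simp only [fEx, fv, fv_fsubst, mem_preSuc, List.mem_map, not_exists, not_and]
  intro v _
  split_ifs with h
  · simp
  · simpa using h

lemma fvs_union (X Y : Set form) : fvs (X ∪ Y) = fvs X ∪ fvs Y :=
  Set.biUnion_union X Y _

lemma fvs_mono {X Y : Set form} (h : X ⊆ Y) : fvs X ⊆ fvs Y :=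
  Set.biUnion_subset_biUnion_left h

lemma notMem_fvs_union_fEx {a : var} {X : Set form} (ha : a ∉ fvs X) (A : form) :
    a ∉ fvs (X ∪ {fEx a A}) := by
  simp only [fvs_union, Set.mem_union, not_or]
  exact ⟨ha, by simpa [fvs] using notMem_fv_fEx a A⟩

lemma is_deriv.finite_root {d : Deriv} (h : is_deriv d) :
    (root d).1.Finite ∧ (root d).2.Finite := by
  cases d with
  | WL s d =>
    obtain ⟨Γ, Δ, A, hΓ, hΔ, -, -, rfl⟩ := h
    exact ⟨(Set.finite_singleton A).union hΓ, hΔ⟩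
  | WR s d =>
    obtain ⟨Γ, Δ, A, hΓ, hΔ, -, -, rfl⟩ := h
    exact ⟨hΓ, hΔ.union (Set.finite_singleton A)⟩
  | _ => exact ⟨h.1, h.2.1⟩

namespace derivable

variable {Γ Δ : Set form} {A B : form} {a : var}

lemma finite (h : derivable (Γ, Δ)) : Γ.Finite ∧ Δ.Finite := by
  obtain ⟨d, hd, hr⟩ := h
  simpa [hr] using hd.finite_root

lemma init (hΓ : A ∈ Γ) (hΔ : A ∈ Δ) (fΓ : Γ.Finite) (fΔ : Δ.Finite) : derivable (Γ, Δ) :=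
  ⟨.Init (Γ, Δ), ⟨fΓ, fΔ, A, hΓ, hΔ⟩, rfl⟩

lemma botL (h : form.Bot ∈ Γ) (fΓ : Γ.Finite) (fΔ : Δ.Finite) : derivable (Γ, Δ) :=
  ⟨.BotL (Γ, Δ), ⟨fΓ, fΔ, h⟩, rfl⟩

lemma topR (h : form.Top ∈ Δ) (fΓ : Γ.Finite) (fΔ : Δ.Finite) : derivable (Γ, Δ) :=
  ⟨.TopR (Γ, Δ), ⟨fΓ, fΔ, h⟩, rfl⟩

lemma andL (h : form.And A B ∈ Γ) (hp : derivable ({A, B} ∪ Γ, Δ)) : derivable (Γ, Δ) := by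
  have f := hp.finite
  obtain ⟨d, hd, hr⟩ := hp
  exact ⟨.AndL (Γ, Δ) d, ⟨f.1.subset Set.subset_union_right, f.2, A, B, h, hd, hr⟩, rfl⟩

lemma andR (h : form.And A B ∈ Δ) (hA : derivable (Γ, Δ ∪ {A})) (hB : derivable (Γ, Δ ∪ {B})) :
    derivable (Γ, Δ) := by
  have f := hA.finite
  obtain ⟨dA, hdA, hrA⟩ := hA
  obtain ⟨dB, hdB, hrB⟩ := hB
  exact ⟨.AndR (Γ, Δ) dA dB,
    ⟨f.1, f.2.subset Set.subset_union_left, A, B, h, hdA, hrA, hdB, hrB⟩, rfl⟩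

lemma orL (h : form.Or A B ∈ Γ) (hA : derivable ({A} ∪ Γ, Δ)) (hB : derivable ({B} ∪ Γ, Δ)) :
    derivable (Γ, Δ) := by
  have f := hA.finite
  obtain ⟨dA, hdA, hrA⟩ := hA
  obtain ⟨dB, hdB, hrB⟩ := hB
  exact ⟨.OrL (Γ, Δ) dA dB,
    ⟨f.1.subset Set.subset_union_right, f.2, A, B, h, hdA, hrA, hdB, hrB⟩, rfl⟩

lemma orR (h : form.Or A B ∈ Δ) (hp : derivable (Γ, Δ ∪ {A, B})) : derivable (Γ, Δ) := by
  have f := hp.finite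
  obtain ⟨d, hd, hr⟩ := hp
  exact ⟨.OrR (Γ, Δ) d, ⟨f.1, f.2.subset Set.subset_union_left, A, B, h, hd, hr⟩, rfl⟩

lemma notL (h : form.Not A ∈ Γ) (hp : derivable (Γ, Δ ∪ {A})) : derivable (Γ, Δ) := by
  have f := hp.finite
  obtain ⟨d, hd, hr⟩ := hp
  exact ⟨.NotL (Γ, Δ) d, ⟨f.1, f.2.subset Set.subset_union_left, A, h, hd, hr⟩, rfl⟩

lemma notR (h : form.Not A ∈ Δ) (hp : derivable ({A} ∪ Γ, Δ)) : derivable (Γ, Δ) := by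
  have f := hp.finite
  obtain ⟨d, hd, hr⟩ := hp
  exact ⟨.NotR (Γ, Δ) d, ⟨f.1.subset Set.subset_union_right, f.2, A, h, hd, hr⟩, rfl⟩

lemma allL (t : tm) (h : fAll a A ∈ Γ) (hp : derivable ({FAll_inst t (fAll a A)} ∪ Γ, Δ)) :
    derivable (Γ, Δ) := by
  have f := hp.finite
  obtain ⟨d, hd, hr⟩ := hp
  exact ⟨.AllL (Γ, Δ) d, ⟨f.1.subset Set.subset_union_right, f.2, A, a, t, h, hd, hr⟩, rfl⟩

lemma allR (h : fAll a A ∈ Δ) (ha : a ∉ fvs (Γ ∪ Δ)) (hp : derivable (Γ, Δ ∪ {A})) :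
    derivable (Γ, Δ) := by
  have f := hp.finite
  obtain ⟨d, hd, hr⟩ := hp
  exact ⟨.AllR (Γ, Δ) d, ⟨f.1, f.2.subset Set.subset_union_left, a, A, h, ha, hd, hr⟩, rfl⟩

lemma exL (h : fEx a A ∈ Γ) (ha : a ∉ fvs (Γ ∪ Δ)) (hp : derivable ({A} ∪ Γ, Δ)) :
    derivable (Γ, Δ) := by
  have f := hp.finite
  obtain ⟨d, hd, hr⟩ := hp
  exact ⟨.ExL (Γ, Δ) d, ⟨f.1.subset Set.subset_union_right, f.2, a, A, h, ha, hd, hr⟩, rfl⟩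

lemma exR (t : tm) (h : fEx a A ∈ Δ) (hp : derivable (Γ, Δ ∪ {FEx_inst t (fEx a A)})) :
    derivable (Γ, Δ) := by
  have f := hp.finite
  obtain ⟨d, hd, hr⟩ := hp
  exact ⟨.ExR (Γ, Δ) d, ⟨f.1, f.2.subset Set.subset_union_left, A, a, t, h, hd, hr⟩, rfl⟩

lemma wl (A : form) (h : derivable (Γ, Δ)) : derivable ({A} ∪ Γ, Δ) := by
  have f := h.finite
  obtain ⟨d, hd, hr⟩ := h
  exact ⟨.WL ({A} ∪ Γ, Δ) d, ⟨Γ, Δ, A, f.1, f.2, hd, hr, rfl⟩, rfl⟩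

lemma wr (A : form) (h : derivable (Γ, Δ)) : derivable (Γ, Δ ∪ {A}) := by
  have f := h.finite
  obtain ⟨d, hd, hr⟩ := h
  exact ⟨.WR (Γ, Δ ∪ {A}) d, ⟨Γ, Δ, A, f.1, f.2, hd, hr, rfl⟩, rfl⟩

lemma union_left (h : derivable (Γ, Δ)) {X : Set form} (hX : X.Finite) :
    derivable (X ∪ Γ, Δ) := by
  induction X, hX using Set.Finite.induction_on with
  | empty => rwa [Set.empty_union]
  | @insert A X _ _ ih => rw [Set.insert_union, Set.insert_eq]; exact ih.wl A

lemma union_right (h : derivable (Γ, Δ)) {Y : Set form} (hY : Y.Finite) :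
    derivable (Γ, Δ ∪ Y) := by
  induction Y, hY using Set.Finite.induction_on with
  | empty => rwa [Set.union_empty]
  | @insert A Y _ _ ih => rw [Set.union_insert, ← Set.union_singleton]; exact ih.wr A

lemma mono {Γ' Δ' : Set form} (h : derivable (Γ, Δ)) (hΓ : Γ ⊆ Γ') (hΔ : Δ ⊆ Δ')
    (fΓ : Γ'.Finite) (fΔ : Δ'.Finite) : derivable (Γ', Δ') := by
  rw [← Set.sdiff_union_of_subset hΓ, ← Set.union_sdiff_cancel hΔ]
  exact (h.union_left fΓ.sdiff).union_right fΔ.sdiff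

lemma orL_intro (hA : derivable ({A} ∪ Γ, Δ)) (hB : derivable ({B} ∪ Γ, Δ)) :
    derivable ({form.Or A B} ∪ Γ, Δ) := by
  refine orL (Set.mem_union_left _ rfl) ?_ ?_ <;> rw [Set.union_left_comm]
  exacts [hA.wl _, hB.wl _]

lemma orR_intro_left (h : derivable (Γ, Δ ∪ {A})) : derivable (Γ, Δ ∪ {form.Or A B}) := by
  refine orR (Set.mem_union_right _ rfl) ?_
  have f := h.finite
  exact h.mono subset_rfl (by grind) f.1 (by simpa using f.2)

lemma orR_intro_right (h : derivable (Γ, Δ ∪ {B})) : derivable (Γ, Δ ∪ {form.Or A B}) := by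
  refine orR (Set.mem_union_right _ rfl) ?_
  have f := h.finite
  exact h.mono subset_rfl (by grind) f.1 (by simpa using f.2)

lemma notL_intro (h : derivable (Γ, Δ ∪ {A})) : derivable ({form.Not A} ∪ Γ, Δ) :=
  notL (Set.mem_union_left _ rfl) (h.wl _)

lemma notR_intro (h : derivable ({A} ∪ Γ, Δ)) : derivable (Γ, Δ ∪ {form.Not A}) :=
  notR (Set.mem_union_right _ rfl) (h.wr _)

lemma exL_intro (h : derivable ({A} ∪ Γ, Δ)) (ha : a ∉ fvs (Γ ∪ Δ)) :
    derivable ({fEx a A} ∪ Γ, Δ) := by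
  refine exL (Set.mem_union_left _ rfl) ?_ (by rw [Set.union_left_comm]; exact h.wl _)
  rw [Set.union_assoc, Set.union_comm]
  exact notMem_fvs_union_fEx ha A

lemma exR_intro (h : derivable (Γ, Δ ∪ {A})) : derivable (Γ, Δ ∪ {fEx a A}) := by
  refine exR a (Set.mem_union_right _ rfl) ?_
  rw [FEx_inst_fEx, Set.union_right_comm]
  exact h.wr _

end derivable

lemma posneg_and (A B : form) : posneg (.And A B) = posneg A ⊔ posneg B := rfl

lemma posneg_or (A B : form) : posneg (.Or A B) = posneg A ⊔ posneg B := rfl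

lemma posneg_not (A : form) : posneg (.Not A) = (posneg A).swap := rfl

lemma posneg_fsubst (s : var → tm) (A : form) : posneg (fsubst s A) = posneg A := by
  induction A generalizing s <;> simp_all [fsubst, posneg]

lemma posneg_fAll (a : var) (A : form) : posneg (fAll a A) = posneg A := by
  simp [fAll, posneg, posneg_fsubst]

lemma posneg_fEx (a : var) (A : form) : posneg (fEx a A) = posneg A := by
  simp [fEx, posneg, posneg_fsubst]

lemma posneg_FAll_inst (t : tm) (A : form) : posneg (FAll_inst t A) = posneg A := by
  cases A <;> simp [FAll_inst, posneg, posneg_fsubst]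

lemma posneg_FEx_inst (t : tm) (A : form) : posneg (FEx_inst t A) = posneg A := by
  cases A <;> simp [FEx_inst, posneg, posneg_fsubst]

def posnegs (X : Set form) : Set pred × Set pred := ⨆ A ∈ X, posneg A

/-- The polarities of the predicates of `⋀ Γ ∧ ¬ ⋁ Δ`. -/
def seqPosneg (Γ Δ : Set form) : Set pred × Set pred := posnegs Γ ⊔ (posnegs Δ).swap

section Polarity

variable {Γ Δ X : Set form} {A : form}

lemma posnegs_singleton (A : form) : posnegs {A} = posneg A := iSup_singleton

lemma posnegs_pair (A B : form) : posnegs {A, B} = posneg A ⊔ posneg B := by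
  rw [posnegs, iSup_insert, iSup_singleton]

lemma posnegs_mono {X Y : Set form} (h : X ⊆ Y) : posnegs X ≤ posnegs Y := biSup_mono h

lemma posnegs_empty : posnegs ∅ = ⊥ := iSup_emptyset

lemma posnegs_union (X Y : Set form) : posnegs (X ∪ Y) = posnegs X ⊔ posnegs Y := iSup_union

lemma posnegs_fst (X : Set form) : (posnegs X).1 = ⋃ A ∈ X, pos A := by
  simp [posnegs, Prod.fst_iSup, pos]

lemma posnegs_snd (X : Set form) : (posnegs X).2 = ⋃ A ∈ X, neg A := by
  simp [posnegs, Prod.snd_iSup, neg]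

lemma seqPosneg_empty_right (Γ : Set form) : seqPosneg Γ ∅ = posnegs Γ := by
  rw [seqPosneg, posnegs_empty]; exact sup_bot_eq _

lemma seqPosneg_empty_left (Δ : Set form) : seqPosneg ∅ Δ = (posnegs Δ).swap := by
  rw [seqPosneg, posnegs_empty]; exact bot_sup_eq _

lemma seqPosneg_mono {Γ' Δ' : Set form} (hΓ : Γ ⊆ Γ') (hΔ : Δ ⊆ Δ') :
    seqPosneg Γ Δ ≤ seqPosneg Γ' Δ' :=
  sup_le_sup (posnegs_mono hΓ) (Prod.swap_le_swap.2 (posnegs_mono hΔ))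

lemma posneg_le_seqPosneg (h : A ∈ Γ) : posneg A ≤ seqPosneg Γ Δ :=
  (le_biSup posneg h).trans le_sup_left

lemma swap_posneg_le_seqPosneg (h : A ∈ Δ) : (posneg A).swap ≤ seqPosneg Γ Δ :=
  (Prod.swap_le_swap.2 (le_biSup posneg h)).trans le_sup_right

lemma seqPosneg_union_left_le (h : posnegs X ≤ seqPosneg Γ Δ) :
    seqPosneg (X ∪ Γ) Δ ≤ seqPosneg Γ Δ := by
  rw [seqPosneg, posnegs_union, sup_assoc]
  exact sup_le h le_rfl

lemma seqPosneg_union_right_le (h : (posnegs X).swap ≤ seqPosneg Γ Δ) :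
    seqPosneg Γ (Δ ∪ X) ≤ seqPosneg Γ Δ := by
  rw [seqPosneg, posnegs_union, Prod.swap_sup, ← sup_assoc]
  exact sup_le le_rfl h

end Polarity

structure IsInterpolant (Γ₁ Δ₁ Γ₂ Δ₂ : Set form) (C : form) : Prop where
  left : derivable (Γ₁, Δ₁ ∪ {C})
  right : derivable ({C} ∪ Γ₂, Δ₂)
  posneg_le : posneg C ≤ seqPosneg Γ₁ Δ₁
  swap_posneg_le : (posneg C).swap ≤ seqPosneg Γ₂ Δ₂

namespace IsInterpolant

variable {Γ₁ Δ₁ Γ₂ Δ₂ Γ₁' Δ₁' : Set form} {C : form}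

lemma symm (h : IsInterpolant Γ₁ Δ₁ Γ₂ Δ₂ C) : IsInterpolant Γ₂ Δ₂ Γ₁ Δ₁ (.Not C) :=
  ⟨h.right.notR_intro, h.left.notL_intro, h.swap_posneg_le, h.posneg_le⟩

lemma bot (h : derivable (Γ₁, Δ₁)) (fΓ₂ : Γ₂.Finite) (fΔ₂ : Δ₂.Finite) :
    IsInterpolant Γ₁ Δ₁ Γ₂ Δ₂ .Bot :=
  ⟨h.wr _, .botL (Set.mem_union_left _ rfl) ((Set.finite_singleton _).union fΓ₂) fΔ₂,
    bot_le, bot_le⟩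

lemma of_mem {A : form} (hΓ₁ : A ∈ Γ₁) (hΔ₂ : A ∈ Δ₂) (fΓ₁ : Γ₁.Finite) (fΔ₁ : Δ₁.Finite)
    (fΓ₂ : Γ₂.Finite) (fΔ₂ : Δ₂.Finite) : IsInterpolant Γ₁ Δ₁ Γ₂ Δ₂ A :=
  ⟨.init hΓ₁ (Set.mem_union_right _ rfl) fΓ₁ (fΔ₁.union (Set.finite_singleton _)),
    .init (Set.mem_union_left _ rfl) hΔ₂ ((Set.finite_singleton _).union fΓ₂) fΔ₂,
    posneg_le_seqPosneg hΓ₁, swap_posneg_le_seqPosneg hΔ₂⟩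

lemma of_premise (h : IsInterpolant Γ₁' Δ₁' Γ₂ Δ₂ C)
    (hder : derivable (Γ₁', Δ₁' ∪ {C}) → derivable (Γ₁, Δ₁ ∪ {C}))
    (hpol : seqPosneg Γ₁' Δ₁' ≤ seqPosneg Γ₁ Δ₁) : IsInterpolant Γ₁ Δ₁ Γ₂ Δ₂ C :=
  ⟨hder h.left, h.right, h.posneg_le.trans hpol, h.swap_posneg_le⟩

lemma or {Γ₁'' Δ₁'' : Set form} {C₁ C₂ : form} (h₁ : IsInterpolant Γ₁' Δ₁' Γ₂ Δ₂ C₁)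
    (h₂ : IsInterpolant Γ₁'' Δ₁'' Γ₂ Δ₂ C₂)
    (hder : derivable (Γ₁', Δ₁' ∪ {C₁}) → derivable (Γ₁'', Δ₁'' ∪ {C₂}) →
      derivable (Γ₁, Δ₁ ∪ {.Or C₁ C₂}))
    (hpol₁ : seqPosneg Γ₁' Δ₁' ≤ seqPosneg Γ₁ Δ₁) (hpol₂ : seqPosneg Γ₁'' Δ₁'' ≤ seqPosneg Γ₁ Δ₁) :
    IsInterpolant Γ₁ Δ₁ Γ₂ Δ₂ (.Or C₁ C₂) :=
  ⟨hder h₁.left h₂.left, h₁.right.orL_intro h₂.right,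
    sup_le (h₁.posneg_le.trans hpol₁) (h₂.posneg_le.trans hpol₂),
    by rw [posneg_or, Prod.swap_sup]; exact sup_le h₁.swap_posneg_le h₂.swap_posneg_le⟩

lemma fEx {a : var} (h : IsInterpolant Γ₁' Δ₁' Γ₂ Δ₂ C)
    (hder : derivable (Γ₁', Δ₁' ∪ {fEx a C}) → derivable (Γ₁, Δ₁ ∪ {fEx a C}))
    (hpol : seqPosneg Γ₁' Δ₁' ≤ seqPosneg Γ₁ Δ₁) (ha : a ∉ fvs (Γ₂ ∪ Δ₂)) :
    IsInterpolant Γ₁ Δ₁ Γ₂ Δ₂ (fEx a C) :=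
  ⟨hder h.left.exR_intro, h.right.exL_intro ha,
    by rw [posneg_fEx]; exact h.posneg_le.trans hpol,
    by rw [posneg_fEx]; exact h.swap_posneg_le⟩

lemma mono {Γ₂' Δ₂' : Set form} (h : IsInterpolant Γ₁ Δ₁ Γ₂ Δ₂ C)
    (hΓ₁ : Γ₁ ⊆ Γ₁') (hΔ₁ : Δ₁ ⊆ Δ₁') (hΓ₂ : Γ₂ ⊆ Γ₂') (hΔ₂ : Δ₂ ⊆ Δ₂')
    (fΓ₁ : Γ₁'.Finite) (fΔ₁ : Δ₁'.Finite) (fΓ₂ : Γ₂'.Finite) (fΔ₂ : Δ₂'.Finite) :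
    IsInterpolant Γ₁' Δ₁' Γ₂' Δ₂' C :=
  ⟨h.left.mono hΓ₁ (Set.union_subset_union_left _ hΔ₁) fΓ₁ (fΔ₁.union (Set.finite_singleton _)),
    h.right.mono (Set.union_subset_union_right _ hΓ₂) hΔ₂
      ((Set.finite_singleton _).union fΓ₂) fΔ₂,
    h.posneg_le.trans (seqPosneg_mono hΓ₁ hΔ₁), h.swap_posneg_le.trans (seqPosneg_mono hΓ₂ hΔ₂)⟩

end IsInterpolant

def SplitInterpolable (Γ Δ : Set form) : Prop :=
  ∀ Γ₁ Δ₁ Γ₂ Δ₂, Γ = Γ₁ ∪ Γ₂ → Δ = Δ₁ ∪ Δ₂ → ∃ C, IsInterpolant Γ₁ Δ₁ Γ₂ Δ₂ C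

namespace SplitInterpolable

open Set

variable {Γ Δ : Set form} {A B : form} {a : var}

lemma of_symm (p : Set form → Set form → Prop)
    (hp : ∀ Γ₁ Δ₁ Γ₂ Δ₂, Γ = Γ₁ ∪ Γ₂ → Δ = Δ₁ ∪ Δ₂ → p Γ₁ Δ₁ ∨ p Γ₂ Δ₂)
    (h : ∀ Γ₁ Δ₁ Γ₂ Δ₂, Γ = Γ₁ ∪ Γ₂ → Δ = Δ₁ ∪ Δ₂ → p Γ₁ Δ₁ → ∃ C, IsInterpolant Γ₁ Δ₁ Γ₂ Δ₂ C) :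
    SplitInterpolable Γ Δ := by
  intro Γ₁ Δ₁ Γ₂ Δ₂ hΓ hΔ
  rcases hp Γ₁ Δ₁ Γ₂ Δ₂ hΓ hΔ with h₁ | h₂
  · exact h Γ₁ Δ₁ Γ₂ Δ₂ hΓ hΔ h₁
  · obtain ⟨C, hC⟩ := h Γ₂ Δ₂ Γ₁ Δ₁ (hΓ.trans (union_comm _ _)) (hΔ.trans (union_comm _ _)) h₂
    exact ⟨_, hC.symm⟩

lemma of_mem_left (hA : A ∈ Γ)
    (h : ∀ Γ₁ Δ₁ Γ₂ Δ₂, Γ = Γ₁ ∪ Γ₂ → Δ = Δ₁ ∪ Δ₂ → A ∈ Γ₁ → ∃ C, IsInterpolant Γ₁ Δ₁ Γ₂ Δ₂ C) :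
    SplitInterpolable Γ Δ :=
  of_symm (fun Γ₁ _ => A ∈ Γ₁) (fun _ _ _ _ hΓ _ => (hΓ ▸ hA : A ∈ _ ∪ _)) h

lemma of_mem_right (hA : A ∈ Δ)
    (h : ∀ Γ₁ Δ₁ Γ₂ Δ₂, Γ = Γ₁ ∪ Γ₂ → Δ = Δ₁ ∪ Δ₂ → A ∈ Δ₁ → ∃ C, IsInterpolant Γ₁ Δ₁ Γ₂ Δ₂ C) :
    SplitInterpolable Γ Δ :=
  of_symm (fun _ Δ₁ => A ∈ Δ₁) (fun _ _ _ _ _ hΔ => (hΔ ▸ hA : A ∈ _ ∪ _)) h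

lemma init (fΓ : Γ.Finite) (fΔ : Δ.Finite) (hΓ : A ∈ Γ) (hΔ : A ∈ Δ) : SplitInterpolable Γ Δ :=
  of_mem_left hΓ fun Γ₁ Δ₁ Γ₂ Δ₂ hΓ' hΔ' hA₁ => by
    obtain ⟨fΓ₁, fΓ₂⟩ := finite_union.1 (hΓ' ▸ fΓ)
    obtain ⟨fΔ₁, fΔ₂⟩ := finite_union.1 (hΔ' ▸ fΔ)
    rcases (hΔ' ▸ hΔ : A ∈ Δ₁ ∪ Δ₂) with hA | hA
    · exact ⟨_, .bot (.init hA₁ hA fΓ₁ fΔ₁) fΓ₂ fΔ₂⟩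
    · exact ⟨_, .of_mem hA₁ hA fΓ₁ fΔ₁ fΓ₂ fΔ₂⟩

lemma botL (fΓ : Γ.Finite) (fΔ : Δ.Finite) (h : form.Bot ∈ Γ) : SplitInterpolable Γ Δ :=
  of_mem_left h fun Γ₁ Δ₁ Γ₂ Δ₂ hΓ hΔ h₁ => by
    obtain ⟨fΓ₁, fΓ₂⟩ := finite_union.1 (hΓ ▸ fΓ)
    obtain ⟨fΔ₁, fΔ₂⟩ := finite_union.1 (hΔ ▸ fΔ)
    exact ⟨_, .bot (.botL h₁ fΓ₁ fΔ₁) fΓ₂ fΔ₂⟩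

lemma topR (fΓ : Γ.Finite) (fΔ : Δ.Finite) (h : form.Top ∈ Δ) : SplitInterpolable Γ Δ :=
  of_mem_right h fun Γ₁ Δ₁ Γ₂ Δ₂ hΓ hΔ h₁ => by
    obtain ⟨fΓ₁, fΓ₂⟩ := finite_union.1 (hΓ ▸ fΓ)
    obtain ⟨fΔ₁, fΔ₂⟩ := finite_union.1 (hΔ ▸ fΔ)
    exact ⟨_, .bot (.topR h₁ fΓ₁ fΔ₁) fΓ₂ fΔ₂⟩

lemma andL (h : form.And A B ∈ Γ) (ih : SplitInterpolable ({A, B} ∪ Γ) Δ) :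
    SplitInterpolable Γ Δ :=
  of_mem_left h fun Γ₁ Δ₁ Γ₂ Δ₂ hΓ hΔ h₁ =>
    (ih ({A, B} ∪ Γ₁) Δ₁ Γ₂ Δ₂ (by rw [hΓ, union_assoc]) hΔ).imp fun _ hC =>
      hC.of_premise (·.andL h₁) <| seqPosneg_union_left_le <| by
        rw [posnegs_pair, ← posneg_and]; exact posneg_le_seqPosneg h₁

lemma orR (h : form.Or A B ∈ Δ) (ih : SplitInterpolable Γ (Δ ∪ {A, B})) :
    SplitInterpolable Γ Δ :=
  of_mem_right h fun Γ₁ Δ₁ Γ₂ Δ₂ hΓ hΔ h₁ =>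
    (ih Γ₁ (Δ₁ ∪ {A, B}) Γ₂ Δ₂ hΓ (by rw [hΔ, union_right_comm])).imp fun _ hC =>
      hC.of_premise (fun hl => .orR (mem_union_left _ h₁) (by rwa [union_right_comm]))
        <| seqPosneg_union_right_le <| by
          rw [posnegs_pair, ← posneg_or]; exact swap_posneg_le_seqPosneg h₁

lemma notL (h : form.Not A ∈ Γ) (ih : SplitInterpolable Γ (Δ ∪ {A})) :
    SplitInterpolable Γ Δ :=
  of_mem_left h fun Γ₁ Δ₁ Γ₂ Δ₂ hΓ hΔ h₁ =>
    (ih Γ₁ (Δ₁ ∪ {A}) Γ₂ Δ₂ hΓ (by rw [hΔ, union_right_comm])).imp fun _ hC =>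
      hC.of_premise (fun hl => .notL h₁ (by rwa [union_right_comm]))
        <| seqPosneg_union_right_le <| by
          rw [posnegs_singleton, ← posneg_not]; exact posneg_le_seqPosneg h₁

lemma notR (h : form.Not A ∈ Δ) (ih : SplitInterpolable ({A} ∪ Γ) Δ) :
    SplitInterpolable Γ Δ :=
  of_mem_right h fun Γ₁ Δ₁ Γ₂ Δ₂ hΓ hΔ h₁ =>
    (ih ({A} ∪ Γ₁) Δ₁ Γ₂ Δ₂ (by rw [hΓ, union_assoc]) hΔ).imp fun _ hC =>
      hC.of_premise (fun hl => .notR (mem_union_left _ h₁) hl)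
        <| seqPosneg_union_left_le <| by
          rw [posnegs_singleton]; exact swap_posneg_le_seqPosneg (A := .Not A) h₁

lemma allL (t : tm) (h : fAll a A ∈ Γ) (ih : SplitInterpolable ({FAll_inst t (fAll a A)} ∪ Γ) Δ) :
    SplitInterpolable Γ Δ :=
  of_mem_left h fun Γ₁ Δ₁ Γ₂ Δ₂ hΓ hΔ h₁ =>
    (ih ({FAll_inst t (fAll a A)} ∪ Γ₁) Δ₁ Γ₂ Δ₂ (by rw [hΓ, union_assoc]) hΔ).imp fun _ hC =>
      hC.of_premise (·.allL t h₁) <| seqPosneg_union_left_le <| by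
        rw [posnegs_singleton, posneg_FAll_inst]; exact posneg_le_seqPosneg h₁

lemma exR (t : tm) (h : fEx a A ∈ Δ) (ih : SplitInterpolable Γ (Δ ∪ {FEx_inst t (fEx a A)})) :
    SplitInterpolable Γ Δ :=
  of_mem_right h fun Γ₁ Δ₁ Γ₂ Δ₂ hΓ hΔ h₁ =>
    (ih Γ₁ (Δ₁ ∪ {FEx_inst t (fEx a A)}) Γ₂ Δ₂ hΓ (by rw [hΔ, union_right_comm])).imp fun _ hC =>
      hC.of_premise (fun hl => .exR t (mem_union_left _ h₁) (by rwa [union_right_comm]))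
        <| seqPosneg_union_right_le <| by
          rw [posnegs_singleton, posneg_FEx_inst]; exact swap_posneg_le_seqPosneg h₁

lemma andR (h : form.And A B ∈ Δ) (ihA : SplitInterpolable Γ (Δ ∪ {A}))
    (ihB : SplitInterpolable Γ (Δ ∪ {B})) : SplitInterpolable Γ Δ :=
  of_mem_right h fun Γ₁ Δ₁ Γ₂ Δ₂ hΓ hΔ h₁ => by
    obtain ⟨C₁, hC₁⟩ := ihA Γ₁ (Δ₁ ∪ {A}) Γ₂ Δ₂ hΓ (by rw [hΔ, union_right_comm])
    obtain ⟨C₂, hC₂⟩ := ihB Γ₁ (Δ₁ ∪ {B}) Γ₂ Δ₂ hΓ (by rw [hΔ, union_right_comm])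
    have hpol : posneg A ⊔ posneg B ≤ ((seqPosneg Γ₁ Δ₁).swap) :=
      Prod.swap_le_swap.1 (swap_posneg_le_seqPosneg (A := .And A B) h₁)
    refine ⟨_, hC₁.or hC₂ (fun hl₁ hl₂ => .andR (mem_union_left _ h₁) ?_ ?_)
      (seqPosneg_union_right_le ?_) (seqPosneg_union_right_le ?_)⟩
    · rw [union_right_comm]; exact hl₁.orR_intro_left
    · rw [union_right_comm]; exact hl₂.orR_intro_right
    · rw [posnegs_singleton]; exact Prod.swap_le_swap.1 (le_sup_left.trans hpol)
    · rw [posnegs_singleton]; exact Prod.swap_le_swap.1 (le_sup_right.trans hpol)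

lemma orL (h : form.Or A B ∈ Γ) (ihA : SplitInterpolable ({A} ∪ Γ) Δ)
    (ihB : SplitInterpolable ({B} ∪ Γ) Δ) : SplitInterpolable Γ Δ :=
  of_mem_left h fun Γ₁ Δ₁ Γ₂ Δ₂ hΓ hΔ h₁ => by
    obtain ⟨C₁, hC₁⟩ := ihA ({A} ∪ Γ₁) Δ₁ Γ₂ Δ₂ (by rw [hΓ, union_assoc]) hΔ
    obtain ⟨C₂, hC₂⟩ := ihB ({B} ∪ Γ₁) Δ₁ Γ₂ Δ₂ (by rw [hΓ, union_assoc]) hΔ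
    have hpol : posneg A ⊔ posneg B ≤ seqPosneg Γ₁ Δ₁ := posneg_le_seqPosneg (A := .Or A B) h₁
    refine ⟨_, hC₁.or hC₂ (fun hl₁ hl₂ => .orL h₁ hl₁.orR_intro_left hl₂.orR_intro_right)
      (seqPosneg_union_left_le ?_) (seqPosneg_union_left_le ?_)⟩
    · rw [posnegs_singleton]; exact le_sup_left.trans hpol
    · rw [posnegs_singleton]; exact le_sup_right.trans hpol

lemma allR (h : fAll a A ∈ Δ) (ha : a ∉ fvs (Γ ∪ Δ)) (ih : SplitInterpolable Γ (Δ ∪ {A})) :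
    SplitInterpolable Γ Δ :=
  of_mem_right h fun Γ₁ Δ₁ Γ₂ Δ₂ hΓ hΔ h₁ => by
    subst hΓ hΔ
    have ha₁ : a ∉ fvs (Γ₁ ∪ Δ₁) := fun h ↦
      ha (fvs_mono (union_subset_union subset_union_left subset_union_left) h)
    have ha₂ : a ∉ fvs (Γ₂ ∪ Δ₂) := fun h ↦
      ha (fvs_mono (union_subset_union subset_union_right subset_union_right) h)
    obtain ⟨C, hC⟩ := ih Γ₁ (Δ₁ ∪ {A}) Γ₂ Δ₂ rfl (union_right_comm _ _ _)
    refine ⟨_, hC.fEx (fun hl => .allR (mem_union_left _ h₁) ?_ ?_)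
      (seqPosneg_union_right_le ?_) ha₂⟩
    · rw [← union_assoc]; exact notMem_fvs_union_fEx ha₁ C
    · rwa [union_right_comm]
    · rw [posnegs_singleton, ← posneg_fAll a]; exact swap_posneg_le_seqPosneg h₁

lemma exL (h : fEx a A ∈ Γ) (ha : a ∉ fvs (Γ ∪ Δ)) (ih : SplitInterpolable ({A} ∪ Γ) Δ) :
    SplitInterpolable Γ Δ :=
  of_mem_left h fun Γ₁ Δ₁ Γ₂ Δ₂ hΓ hΔ h₁ => by
    subst hΓ hΔ
    have ha₁ : a ∉ fvs (Γ₁ ∪ Δ₁) := fun h ↦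
      ha (fvs_mono (union_subset_union subset_union_left subset_union_left) h)
    have ha₂ : a ∉ fvs (Γ₂ ∪ Δ₂) := fun h ↦
      ha (fvs_mono (union_subset_union subset_union_right subset_union_right) h)
    obtain ⟨C, hC⟩ := ih ({A} ∪ Γ₁) Δ₁ Γ₂ Δ₂ (union_assoc _ _ _).symm rfl
    refine ⟨_, hC.fEx (fun hl => .exL h₁ ?_ hl) (seqPosneg_union_left_le ?_) ha₂⟩
    · rw [← union_assoc]; exact notMem_fvs_union_fEx ha₁ C
    · rw [posnegs_singleton, ← posneg_fEx a]; exact posneg_le_seqPosneg h₁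

lemma mono {Γ' Δ' : Set form} (h : SplitInterpolable Γ Δ) (hΓ : Γ ⊆ Γ') (hΔ : Δ ⊆ Δ')
    (fΓ : Γ'.Finite) (fΔ : Δ'.Finite) : SplitInterpolable Γ' Δ' := by
  intro Γ₁ Δ₁ Γ₂ Δ₂ hΓ' hΔ'
  obtain ⟨fΓ₁, fΓ₂⟩ := finite_union.1 (hΓ' ▸ fΓ)
  obtain ⟨fΔ₁, fΔ₂⟩ := finite_union.1 (hΔ' ▸ fΔ)
  obtain ⟨C, hC⟩ := h (Γ ∩ Γ₁) (Δ ∩ Δ₁) (Γ ∩ Γ₂) (Δ ∩ Δ₂)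
    (by rw [← inter_union_distrib_left, ← hΓ', inter_eq_left.2 hΓ])
    (by rw [← inter_union_distrib_left, ← hΔ', inter_eq_left.2 hΔ])
  exact ⟨C, hC.mono inter_subset_right inter_subset_right inter_subset_right inter_subset_right
    fΓ₁ fΔ₁ fΓ₂ fΔ₂⟩

end SplitInterpolable

lemma is_deriv.splitInterpolable {d : Deriv} (hd : is_deriv d) {Γ Δ : Set form}
    (hr : root d = (Γ, Δ)) : SplitInterpolable Γ Δ := by
  induction d generalizing Γ Δ with
  | Init s => cases hr; obtain ⟨fΓ, fΔ, A, hΓ, hΔ⟩ := hd; exact .init fΓ fΔ hΓ hΔ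
  | BotL s => cases hr; obtain ⟨fΓ, fΔ, h⟩ := hd; exact .botL fΓ fΔ h
  | TopR s => cases hr; obtain ⟨fΓ, fΔ, h⟩ := hd; exact .topR fΓ fΔ h
  | AndL s d ih => cases hr; obtain ⟨-, -, A, B, h, hd, hr'⟩ := hd; exact .andL h (ih hd hr')
  | AndR s dA dB ihA ihB =>
    cases hr
    obtain ⟨-, -, A, B, h, hdA, hrA, hdB, hrB⟩ := hd
    exact .andR h (ihA hdA hrA) (ihB hdB hrB)
  | OrL s dA dB ihA ihB =>
    cases hr
    obtain ⟨-, -, A, B, h, hdA, hrA, hdB, hrB⟩ := hd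
    exact .orL h (ihA hdA hrA) (ihB hdB hrB)
  | OrR s d ih => cases hr; obtain ⟨-, -, A, B, h, hd, hr'⟩ := hd; exact .orR h (ih hd hr')
  | NotL s d ih => cases hr; obtain ⟨-, -, A, h, hd, hr'⟩ := hd; exact .notL h (ih hd hr')
  | NotR s d ih => cases hr; obtain ⟨-, -, A, h, hd, hr'⟩ := hd; exact .notR h (ih hd hr')
  | AllL s d ih => cases hr; obtain ⟨-, -, A, a, t, h, hd, hr'⟩ := hd; exact .allL t h (ih hd hr')
  | AllR s d ih => cases hr; obtain ⟨-, -, a, A, h, ha, hd, hr'⟩ := hd; exact .allR h ha (ih hd hr')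
  | ExL s d ih => cases hr; obtain ⟨-, -, a, A, h, ha, hd, hr'⟩ := hd; exact .exL h ha (ih hd hr')
  | ExR s d ih => cases hr; obtain ⟨-, -, A, a, t, h, hd, hr'⟩ := hd; exact .exR t h (ih hd hr')
  | WL s d ih =>
    obtain ⟨Γ', Δ', A, fΓ, fΔ, hd, hr', rfl⟩ := hd
    obtain ⟨rfl, rfl⟩ := Prod.mk.inj hr
    exact (ih hd hr').mono Set.subset_union_right subset_rfl
      ((Set.finite_singleton A).union fΓ) fΔ
  | WR s d ih =>
    obtain ⟨Γ', Δ', A, fΓ, fΔ, hd, hr', rfl⟩ := hd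
    obtain ⟨rfl, rfl⟩ := Prod.mk.inj hr
    exact (ih hd hr').mono subset_rfl Set.subset_union_left fΓ
      (fΔ.union (Set.finite_singleton A))

theorem craig_interpolation (d : Deriv) (Γ Δ : Set form)
    (hd : is_deriv d) (hr : root d = (Γ, Δ)) :
    ∃ C : form,
      (∃ dl, is_deriv dl ∧ root dl = (Γ, {C})) ∧
      (∃ dr, is_deriv dr ∧ root dr = ({C}, Δ)) ∧
      pos C ⊆ (⋃ A ∈ Γ, pos A) ∩ (⋃ A ∈ Δ, pos A) ∧
      neg C ⊆ (⋃ A ∈ Γ, neg A) ∩ (⋃ A ∈ Δ, neg A) := by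
  obtain ⟨C, hC⟩ := hd.splitInterpolable hr Γ ∅ ∅ Δ (Set.union_empty Γ).symm
    (Set.empty_union Δ).symm
  have hΓ : posneg C ≤ posnegs Γ := seqPosneg_empty_right Γ ▸ hC.posneg_le
  have hΔ : posneg C ≤ posnegs Δ :=
    Prod.swap_le_swap.1 (seqPosneg_empty_left Δ ▸ hC.swap_posneg_le)
  refine ⟨C, Set.empty_union {C} ▸ hC.left, Set.union_empty {C} ▸ hC.right, ?_, ?_⟩
  · rw [← posnegs_fst, ← posnegs_fst]; exact Set.subset_inter hΓ.1 hΔ.1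
  · rw [← posnegs_snd, ← posnegs_snd]; exact Set.subset_inter hΓ.2 hΔ.2

end Craig
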